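/- A lattice triangle in ℝ² contains no lattice points other than its three vertices if and only if its area is 1/2. -/

import Mathlib

/-!
Write the triangle as `a + L(T)`, where `T = conv {0, e₁, e₂}` is the standard triangle and
`L (s, t) = s • (b - a) + t • (c - a)` has integer determinant `d ≠ 0`; the area is `|d| / 2`.
The lattice points of the triangle correspond to the points of `T` in the lattice
`Λ = L⁻¹ ℤ² ⊇ ℤ²`, so the triangle is empty iff `T ∩ Λ = {0, e₁, e₂}`. Since `T` contains a
representative of every nonzero class of `Λ / ℤ²` (reduce modulo `ℤ²` into `[0, 1)²` and, if
necessary, reflect in `(1/2, 1/2)`), this happens iff `Λ = ℤ²`, i.e. iff `L⁻¹` is integral,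
i.e. iff `d = ±1`.
-/

open MeasureTheory

/-- The lattice `ℤ² ⊂ ℝ²`. -/
def lat : Set (ℝ × ℝ) := {p | ∃ a b : ℤ, p = ((a : ℝ), (b : ℝ))}

open Set Pointwise

namespace LatticeTriangle

def cross (u v : ℝ × ℝ) : ℝ := u.1 * v.2 - u.2 * v.1

def linCombMap (u v : ℝ × ℝ) : ℝ × ℝ →ₗ[ℝ] ℝ × ℝ :=
  (LinearMap.toSpanSingleton ℝ _ u).coprod (LinearMap.toSpanSingleton ℝ _ v)

@[simp]
lemma linCombMap_apply (u v q : ℝ × ℝ) : linCombMap u v q = q.1 • u + q.2 • v := rfl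

lemma cross_linCombMap (u v p q : ℝ × ℝ) :
    cross (linCombMap u v p) (linCombMap u v q) = cross p q * cross u v := by
  simp only [linCombMap_apply, cross, Prod.fst_add, Prod.snd_add, Prod.smul_fst, Prod.smul_snd,
    smul_eq_mul]
  ring

lemma det_linCombMap (u v : ℝ × ℝ) : LinearMap.det (linCombMap u v) = cross u v := by
  rw [← LinearMap.det_toMatrix (Module.Basis.finTwoProd ℝ), Matrix.det_fin_two]
  simp [LinearMap.toMatrix_apply, cross]
  ring

lemma bijective_linCombMap_iff (u v : ℝ × ℝ) :
    Function.Bijective (linCombMap u v) ↔ cross u v ≠ 0 := by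
  rw [← Module.End.isUnit_iff, LinearMap.isUnit_iff_isUnit_det, det_linCombMap, isUnit_iff_ne_zero]

lemma cross_ne_zero_of_not_collinear {a b c : ℝ × ℝ}
    (h : ¬ Collinear ℝ ({a, b, c} : Set (ℝ × ℝ))) : cross (b - a) (c - a) ≠ 0 := by
  rw [← bijective_linCombMap_iff]
  by_contra hL
  apply h
  set L := linCombMap (b - a) (c - a)
  have hrank : Module.finrank ℝ (LinearMap.range L) ≤ 1 := by
    have hsurj : LinearMap.range L ≠ ⊤ := fun htop =>
      hL ⟨LinearMap.injective_iff_surjective.mpr (LinearMap.range_eq_top.mp htop),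
        LinearMap.range_eq_top.mp htop⟩
    simpa [Module.finrank_prod] using Submodule.finrank_lt hsurj
  have hspan : vectorSpan ℝ {a, b, c} ≤ LinearMap.range L := by
    rw [vectorSpan_eq_span_vsub_set_right ℝ (mem_insert a _), Submodule.span_le]
    rintro _ ⟨p, hp, rfl⟩
    rcases hp with rfl | rfl | rfl
    · exact ⟨0, by simp⟩
    · exact ⟨(1, 0), by simp [L]⟩
    · exact ⟨(0, 1), by simp [L]⟩
  rw [collinear_iff_finrank_le_one]
  exact (Submodule.finrank_mono hspan).trans hrank

def latSubgroup : AddSubgroup (ℝ × ℝ) :=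
  (AddSubgroup.zmultiples (1 : ℝ)).prod (AddSubgroup.zmultiples 1)

lemma mem_lat_iff {p : ℝ × ℝ} :
    p ∈ lat ↔ p.1 ∈ range ((↑) : ℤ → ℝ) ∧ p.2 ∈ range ((↑) : ℤ → ℝ) := by
  simp [lat, Prod.ext_iff, eq_comm]

@[simp]
lemma coe_latSubgroup : (latSubgroup : Set (ℝ × ℝ)) = lat := by
  ext p
  simp [latSubgroup, mem_lat_iff, AddSubgroup.mem_prod, AddSubgroup.mem_zmultiples_iff]

lemma vadd_lat {a : ℝ × ℝ} (ha : a ∈ lat) : a +ᵥ lat = lat := by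
  rw [← coe_latSubgroup] at ha ⊢
  exact vadd_coe_set ha

lemma cross_mem_range_intCast {u v : ℝ × ℝ} (hu : u ∈ lat) (hv : v ∈ lat) :
    cross u v ∈ range ((↑) : ℤ → ℝ) := by
  obtain ⟨m, n, rfl⟩ := hu
  obtain ⟨k, l, rfl⟩ := hv
  exact ⟨m * l - n * k, by push_cast [cross]; ring⟩

lemma mapsTo_linCombMap_lat {u v : ℝ × ℝ} (hu : u ∈ lat) (hv : v ∈ lat) :
    MapsTo (linCombMap u v) lat lat := by
  rintro _ ⟨m, n, rfl⟩
  rw [← coe_latSubgroup] at hu hv ⊢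
  simpa only [SetLike.mem_coe, linCombMap_apply, Int.cast_smul_eq_zsmul] using
    add_mem (zsmul_mem hu m) (zsmul_mem hv n)

def stdTriangle : Set (ℝ × ℝ) := {p | 0 ≤ p.1 ∧ 0 ≤ p.2 ∧ p.1 + p.2 ≤ 1}

lemma convex_stdTriangle : Convex ℝ stdTriangle := by
  rintro p ⟨hp₁, hp₂, hp⟩ q ⟨hq₁, hq₂, hq⟩ s t hs ht hst
  simp only [stdTriangle, mem_ofPred_eq, Prod.fst_add, Prod.snd_add, Prod.smul_fst,
    Prod.smul_snd, smul_eq_mul]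
  refine ⟨by positivity, by positivity, ?_⟩
  nlinarith

lemma convexHull_vertices_eq_stdTriangle :
    convexHull ℝ ({0, (1, 0), (0, 1)} : Set (ℝ × ℝ)) = stdTriangle := by
  refine (convexHull_min ?_ convex_stdTriangle).antisymm fun p ⟨hx, hy, hxy⟩ => ?_
  · rintro p (rfl | rfl | rfl) <;> norm_num [stdTriangle]
  · have := (convex_convexHull ℝ ({0, (1, 0), (0, 1)} : Set (ℝ × ℝ))).sum_mem
      (t := Finset.univ) (w := ![1 - p.1 - p.2, p.1, p.2]) (z := ![0, (1, 0), (0, 1)])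
      (by intro i _; fin_cases i <;> simp <;> linarith)
      (by simp [Fin.sum_univ_three]; ring)
      (by intro i _; fin_cases i <;> exact subset_convexHull ℝ _ (by simp))
    simpa [Fin.sum_univ_three] using this

lemma measurableSet_stdTriangle : MeasurableSet stdTriangle := by
  simp only [stdTriangle, ofPred_and]
  measurability

lemma volume_stdTriangle : volume stdTriangle = 1 / 2 := by
  have hslice (x : ℝ) : volume (Prod.mk x ⁻¹' stdTriangle) =
      (Icc 0 1).indicator (fun x => ENNReal.ofReal (1 - x)) x := by
    by_cases hx : x ∈ Icc 0 1
    · have : Prod.mk x ⁻¹' stdTriangle = Icc 0 (1 - x) := by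
        ext y
        simp [stdTriangle, hx.1, le_sub_iff_add_le']
      rw [this, Real.volume_Icc, indicator_of_mem hx, sub_zero]
    · have : Prod.mk x ⁻¹' stdTriangle = ∅ := by
        ext y
        simp only [mem_Icc, not_and_or, not_le] at hx
        simp only [stdTriangle, mem_preimage, mem_ofPred_eq, mem_empty_iff_false, iff_false]
        rintro ⟨h₁, h₂, h₃⟩
        rcases hx with hx | hx <;> linarith
      rw [this, measure_empty, indicator_of_notMem hx]
  have hint : ∫ x in Icc (0 : ℝ) 1, (1 - x) = 1 / 2 := by
    rw [integral_Icc_eq_integral_Ioc, ← intervalIntegral.integral_of_le zero_le_one,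
      intervalIntegral.integral_sub intervalIntegrable_const
      intervalIntegral.intervalIntegrable_id, integral_id]
    norm_num
  rw [Measure.volume_eq_prod, Measure.prod_apply measurableSet_stdTriangle]
  simp_rw [hslice]
  rw [lintegral_indicator measurableSet_Icc, ← ofReal_integral_eq_lintegral_ofReal
    (f := fun x => 1 - x) (continuous_const.sub continuous_id).integrableOn_Icc
    ((ae_restrict_iff' measurableSet_Icc).mpr (.of_forall fun x hx => sub_nonneg.mpr hx.2)), hint,
    ENNReal.ofReal_div_of_pos two_pos]
  simp

lemma stdTriangle_inter_lat : stdTriangle ∩ lat = {0, (1, 0), (0, 1)} := by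
  ext p
  constructor
  · rintro ⟨⟨h₁, h₂, h₃⟩, m, n, rfl⟩
    dsimp only at h₁ h₂ h₃
    have hm : 0 ≤ m := by exact_mod_cast h₁
    have hn : 0 ≤ n := by exact_mod_cast h₂
    have hmn : m + n ≤ 1 := by exact_mod_cast h₃
    obtain ⟨rfl, rfl⟩ | ⟨rfl, rfl⟩ | ⟨rfl, rfl⟩ :
        (m = 0 ∧ n = 0) ∨ (m = 1 ∧ n = 0) ∨ (m = 0 ∧ n = 1) := by omega
    all_goals simp [Prod.ext_iff]
  · rintro (rfl | rfl | rfl)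
    · exact ⟨by norm_num [stdTriangle], 0, 0, by simp [Prod.ext_iff]⟩
    · exact ⟨by norm_num [stdTriangle], 1, 0, by simp⟩
    · exact ⟨by norm_num [stdTriangle], 0, 1, by simp⟩

lemma subset_lat_of_stdTriangle_inter_subset (Λ : AddSubgroup (ℝ × ℝ)) (hΛ : lat ⊆ Λ)
    (h : stdTriangle ∩ Λ ⊆ {0, (1, 0), (0, 1)}) : (Λ : Set (ℝ × ℝ)) ⊆ lat := by
  intro q hq
  set r : ℝ × ℝ := (Int.fract q.1, Int.fract q.2)
  have hr : r ∈ Λ := by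
    have : r = q - ((⌊q.1⌋ : ℝ), (⌊q.2⌋ : ℝ)) :=
      Prod.ext (Int.self_sub_floor q.1).symm (Int.self_sub_floor q.2).symm
    exact this ▸ sub_mem hq (hΛ ⟨_, _, rfl⟩)
  have hr₁ := Int.fract_nonneg q.1
  have hr₂ := Int.fract_nonneg q.2
  have hr₁' := Int.fract_lt_one q.1
  have hr₂' := Int.fract_lt_one q.2
  suffices r = 0 by
    simp only [r, Prod.ext_iff, Prod.fst_zero, Prod.snd_zero, Int.fract_eq_zero_iff] at this
    exact mem_lat_iff.mpr this
  by_cases hsum : r.1 + r.2 ≤ 1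
  · have := h ⟨⟨hr₁, hr₂, hsum⟩, hr⟩
    simp only [mem_insert_iff, mem_singleton_iff, Prod.ext_iff, r] at this
    rcases this with h0 | ⟨h1, -⟩ | ⟨-, h1⟩
    · exact Prod.ext h0.1 h0.2
    · linarith
    · linarith
  · have hone : ((1 : ℝ), (1 : ℝ)) ∈ lat := ⟨1, 1, by simp⟩
    have := h ⟨⟨by simp [r]; linarith, by simp [r]; linarith, by simp [r] at hsum ⊢; linarith⟩,
      sub_mem (hΛ hone) hr⟩
    simp only [mem_insert_iff, mem_singleton_iff, Prod.ext_iff, Prod.fst_sub, Prod.snd_sub,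
      Prod.fst_zero, Prod.snd_zero, r] at this
    rcases this with ⟨h0, -⟩ | ⟨-, h0⟩ | ⟨h0, -⟩ <;> linarith

lemma stdTriangle_inter_eq_iff_subset_lat (Λ : AddSubgroup (ℝ × ℝ)) (hΛ : lat ⊆ Λ) :
    stdTriangle ∩ Λ = {0, (1, 0), (0, 1)} ↔ (Λ : Set (ℝ × ℝ)) ⊆ lat :=
  ⟨fun h => subset_lat_of_stdTriangle_inter_subset Λ hΛ h.subset, fun h =>
    (stdTriangle_inter_lat ▸ inter_subset_inter_right _ h).antisymm
      (stdTriangle_inter_lat ▸ inter_subset_inter_right _ hΛ)⟩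

lemma stdTriangle_inter_preimage_eq_iff {u v : ℝ × ℝ} (hu : u ∈ lat) (hv : v ∈ lat) :
    stdTriangle ∩ linCombMap u v ⁻¹' lat = {0, (1, 0), (0, 1)} ↔
      linCombMap u v ⁻¹' lat ⊆ lat := by
  simpa using stdTriangle_inter_eq_iff_subset_lat
    (latSubgroup.comap (linCombMap u v).toAddMonoidHom)
    (by simpa using (mapsTo_linCombMap_lat hu hv).subset_preimage)

lemma abs_cross_eq_one_of_preimage_subset_lat {u v : ℝ × ℝ} (hu : u ∈ lat) (hv : v ∈ lat)
    (hd : cross u v ≠ 0) (h : linCombMap u v ⁻¹' lat ⊆ lat) : |cross u v| = 1 := by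
  obtain ⟨d, hd_eq⟩ := cross_mem_range_intCast hu hv
  have hL := ((bijective_linCombMap_iff u v).mpr hd).surjective
  obtain ⟨q₁, hq₁⟩ := hL (1, 0)
  obtain ⟨q₂, hq₂⟩ := hL (0, 1)
  obtain ⟨m₁, n₁, rfl⟩ := h (show linCombMap u v q₁ ∈ lat from hq₁ ▸ ⟨1, 0, by simp⟩)
  obtain ⟨m₂, n₂, rfl⟩ := h (show linCombMap u v q₂ ∈ lat from hq₂ ▸ ⟨0, 1, by simp⟩)
  have hcross := cross_linCombMap u v (m₁, n₁) (m₂, n₂)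
  rw [hq₁, hq₂, ← hd_eq] at hcross
  have hunit : d * (m₁ * n₂ - n₁ * m₂) = 1 := by
    simp only [cross] at hcross
    exact_mod_cast (by linarith : (d : ℝ) * (m₁ * n₂ - n₁ * m₂) = 1)
  rw [← hd_eq]
  rcases Int.eq_one_or_neg_one_of_mul_eq_one hunit with rfl | rfl <;> norm_num

lemma preimage_linCombMap_subset_lat {u v : ℝ × ℝ} (hu : u ∈ lat) (hv : v ∈ lat)
    (h : |cross u v| = 1) : linCombMap u v ⁻¹' lat ⊆ lat := by
  obtain ⟨d, hd_eq⟩ := cross_mem_range_intCast hu hv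
  have hd_unit : d = 1 ∨ d = -1 := by
    rwa [← hd_eq, ← Int.cast_abs, Int.cast_eq_one, abs_eq zero_le_one] at h
  have hdiv (x : ℝ) (hx : x * d ∈ range ((↑) : ℤ → ℝ)) : x ∈ range ((↑) : ℤ → ℝ) := by
    obtain ⟨n, hn⟩ := hx
    rcases hd_unit with rfl | rfl
    · exact ⟨n, by simpa using hn⟩
    · exact ⟨-n, by push_cast at hn ⊢; linarith⟩
  intro q hq
  have hcross₁ : cross (linCombMap u v q) v = q.1 * d := by
    rw [hd_eq]
    simp [cross]
    ring
  have hcross₂ : cross u (linCombMap u v q) = q.2 * d := by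
    rw [hd_eq]
    simp [cross]
    ring
  exact mem_lat_iff.mpr ⟨hdiv _ (hcross₁ ▸ cross_mem_range_intCast hq hv),
    hdiv _ (hcross₂ ▸ cross_mem_range_intCast hu hq)⟩

lemma preimage_linCombMap_subset_lat_iff {u v : ℝ × ℝ} (hu : u ∈ lat) (hv : v ∈ lat)
    (hd : cross u v ≠ 0) : linCombMap u v ⁻¹' lat ⊆ lat ↔ |cross u v| = 1 :=
  ⟨abs_cross_eq_one_of_preimage_subset_lat hu hv hd, preimage_linCombMap_subset_lat hu hv⟩

lemma triple_eq_vadd_image (a b c : ℝ × ℝ) :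
    ({a, b, c} : Set (ℝ × ℝ)) = a +ᵥ linCombMap (b - a) (c - a) '' {0, (1, 0), (0, 1)} := by
  simp [image_insert_eq, vadd_set_insert]

lemma convexHull_triple_eq_vadd_image (a b c : ℝ × ℝ) :
    convexHull ℝ {a, b, c} = a +ᵥ linCombMap (b - a) (c - a) '' stdTriangle := by
  rw [triple_eq_vadd_image a b c, convexHull_vadd, ← LinearMap.image_convexHull,
    convexHull_vertices_eq_stdTriangle]

lemma volume_convexHull_triple (a b c : ℝ × ℝ) :
    volume (convexHull ℝ ({a, b, c} : Set (ℝ × ℝ))) =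
      ENNReal.ofReal (|cross (b - a) (c - a)| / 2) := by
  rw [convexHull_triple_eq_vadd_image, measure_vadd, Measure.addHaar_image_linearMap,
    det_linCombMap, volume_stdTriangle, ENNReal.ofReal_div_of_pos two_pos]
  simp [div_eq_mul_inv]

lemma convexHull_triple_inter_lat_eq_iff {a b c : ℝ × ℝ} (ha : a ∈ lat)
    (hd : cross (b - a) (c - a) ≠ 0) :
    convexHull ℝ {a, b, c} ∩ lat = {a, b, c} ↔
      stdTriangle ∩ linCombMap (b - a) (c - a) ⁻¹' lat = {0, (1, 0), (0, 1)} := by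
  set L := linCombMap (b - a) (c - a)
  have hinj : Function.Injective fun S : Set (ℝ × ℝ) => a +ᵥ L '' S :=
    (AddAction.injective a).comp
      (image_injective.mpr ((bijective_linCombMap_iff _ _).mpr hd).injective)
  have hinter : convexHull ℝ {a, b, c} ∩ lat = a +ᵥ L '' (stdTriangle ∩ L ⁻¹' lat) := by
    rw [image_inter_preimage, vadd_set_inter, vadd_lat ha, convexHull_triple_eq_vadd_image]
  rw [hinter, triple_eq_vadd_image a b c]
  exact hinj.eq_iff

end LatticeTriangle

open LatticeTriangle in
/-- A lattice triangle (convex hull of three non-collinear lattice points) contains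
no lattice points other than its three vertices if and only if its area is `1/2`. -/
theorem lattice_triangle_empty_iff_area_half (a b c : ℝ × ℝ)
    (ha : a ∈ lat) (hb : b ∈ lat) (hc : c ∈ lat)
    (hnc : ¬ Collinear ℝ ({a, b, c} : Set (ℝ × ℝ))) :
    convexHull ℝ ({a, b, c} : Set (ℝ × ℝ)) ∩ lat = {a, b, c}
      ↔ volume (convexHull ℝ ({a, b, c} : Set (ℝ × ℝ))) = 1 / 2 := by
  have hd := cross_ne_zero_of_not_collinear hnc
  have hu : b - a ∈ lat := by rw [← coe_latSubgroup] at *; exact sub_mem hb ha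
  have hv : c - a ∈ lat := by rw [← coe_latSubgroup] at *; exact sub_mem hc ha
  rw [convexHull_triple_inter_lat_eq_iff ha hd, stdTriangle_inter_preimage_eq_iff hu hv,
    preimage_linCombMap_subset_lat_iff hu hv hd, volume_convexHull_triple,
    show (1 / 2 : ENNReal) = ENNReal.ofReal (1 / 2) by norm_num [ENNReal.ofReal_div_of_pos],
    ENNReal.ofReal_eq_ofReal_iff (by positivity) (by norm_num), div_left_inj' two_ne_zero]
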